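/- Under D_ε with 2/25 < ε < 1/4, the linear predictor h(X,A) = (1/2 − 2ε)A + 1/4 + ε minimizes the expected squared loss E[(w₁X + w₂A + b − Y)²] over all (w₁,w₂,b) with |w₁|+|w₂| ≤ 1/2 − 2ε; this is certified by KKT conditions with multiplier λ=1/4, where the subdifferential of the Lagrangian contains zero at (w₁,w₂,b)=(0, 1/2−2ε, 1/4+ε). -/

import Mathlib

/-!
The loss is a convex quadratic in `(w₁, w₂, b)`. At `(0, 1/2 - 2ε, 1/4 + ε)` its gradient is
`(g, -1/4, 0)` with `|g| ≤ 1/4` (this is where `ε > 2/25` enters), so the linear part of the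
expansion is nonnegative on the `ℓ¹`-ball (KKT with `λ = 1/4`) and the quadratic part is a
second moment.
-/

/-- The joint pmf of `(X, A, Y)` under `D_ε`. -/
noncomputable def pD (ε : ℝ) (x a y : Bool) : ℝ :=
  (1 / 2) * (if a = y then 1 - ε else ε) * (if x = y then 1 - 2 * ε else 2 * ε)

/-- `{0,1}`-valued random variables as reals. -/
def ind (b : Bool) : ℝ := if b then 1 else 0

noncomputable def Lsq (ε w1 w2 b : ℝ) : ℝ :=
  ∑ x : Bool, ∑ a : Bool, ∑ y : Bool,
    pD ε x a y * (w1 * ind x + w2 * ind a + b - ind y) ^ 2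

/-- The KKT condition for the `ℓ¹`-ball: `|g| ≤ λ` says `(-g, λ) ∈ λ ∂‖·‖₁ (0, c)`. -/
theorem neg_mul_le_of_abs_add_abs_le {g l w1 w2 c : ℝ} (hg : |g| ≤ l)
    (hw : |w1| + |w2| ≤ c) : -(l * c) ≤ g * w1 - l * w2 := by
  have hl : 0 ≤ l := (abs_nonneg g).trans hg
  have hgw : -(l * |w1|) ≤ g * w1 := by
    calc -(l * |w1|) ≤ -(|g| * |w1|) := by gcongr
      _ = -|g * w1| := by rw [abs_mul]
      _ ≤ g * w1 := neg_abs_le _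
  nlinarith [le_abs_self w2]

theorem pD_nonneg {ε : ℝ} (h0 : 0 ≤ ε) (h1 : ε ≤ 1 / 2) (x a y : Bool) : 0 ≤ pD ε x a y := by
  unfold pD
  split_ifs <;> refine mul_nonneg (mul_nonneg (by norm_num) ?_) ?_ <;> linarith

/-- `∂L/∂w₁` at the predictor `(0, 1/2 - 2ε, 1/4 + ε)`, i.e. `2 E[X (h(X, A) - Y)]`. -/
noncomputable def slopeX (ε : ℝ) : ℝ := -1 / 4 - ε / 2 + 8 * ε ^ 2 - 8 * ε ^ 3

/-- Exact Taylor expansion at the predictor: the gradient there is `(slopeX ε, -1/4, 0)`. -/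
theorem Lsq_eq_add_slope_add_sum (ε w1 w2 b : ℝ) :
    Lsq ε w1 w2 b = Lsq ε 0 (1 / 2 - 2 * ε) (1 / 4 + ε)
      + (slopeX ε * w1 - 1 / 4 * (w2 - (1 / 2 - 2 * ε)))
      + ∑ x : Bool, ∑ a : Bool, ∑ y : Bool, pD ε x a y *
          (w1 * ind x + (w2 - (1 / 2 - 2 * ε)) * ind a + (b - (1 / 4 + ε))) ^ 2 := by
  simp only [Lsq, pD, ind, slopeX, Fintype.sum_bool, if_true, if_false, Bool.false_eq_true,
    Bool.true_eq_false]
  ring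

theorem abs_slopeX_le {ε : ℝ} (h0 : 2 / 25 < ε) (h1 : ε < 1 / 4) : |slopeX ε| ≤ 1 / 4 := by
  unfold slopeX
  rw [abs_le]
  constructor <;> nlinarith [mul_pos (sub_pos.2 h0) (sub_pos.2 h1), sq_nonneg ε]

/-- Under `D_ε` with `2/25 < ε < 1/4`, the linear predictor
`h(X, A) = (1/2 - 2ε) A + 1/4 + ε` minimizes the expected squared loss over all
`(w₁, w₂, b)` with `|w₁| + |w₂| ≤ 1/2 - 2ε`. -/
theorem stmt15 (ε : ℝ) (hε0 : 2 / 25 < ε) (hε1 : ε < 1 / 4)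
    (w1 w2 b : ℝ) (hcon : |w1| + |w2| ≤ 1 / 2 - 2 * ε) :
    Lsq ε 0 (1 / 2 - 2 * ε) (1 / 4 + ε) ≤ Lsq ε w1 w2 b := by
  have hlin := neg_mul_le_of_abs_add_abs_le (abs_slopeX_le hε0 hε1) hcon
  have hquad : 0 ≤ ∑ x : Bool, ∑ a : Bool, ∑ y : Bool, pD ε x a y *
      (w1 * ind x + (w2 - (1 / 2 - 2 * ε)) * ind a + (b - (1 / 4 + ε))) ^ 2 :=
    Finset.sum_nonneg fun x _ => Finset.sum_nonneg fun a _ => Finset.sum_nonneg fun y _ =>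
      mul_nonneg (pD_nonneg (by linarith) (by linarith) x a y) (sq_nonneg _)
  rw [Lsq_eq_add_slope_add_sum ε w1 w2 b]
  linarith
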